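/- Let A be a Novikov algebra over a field k of characteristic zero and let I and J be two-sided ideals of A. Then the subspace [I,J] spanned by all commutators [x,y] = x·y − y·x with x ∈ I, y ∈ J is also a two-sided ideal of A. -/

import Mathlib

/-!
For `x ∈ I`, `y ∈ J` and any `b`, right-commutativity and left-symmetry give
`2 • ([x, y] b) = [x b, y] + [x, y b]`, so `[I, J]` is closed under right multiplication once `2`
is invertible. Left-symmetry alone gives `a [x, y] = [a x, y] + [x, a y] - [x, y] a`, which reduces
closure under left multiplication to the right case.
-/

namespace NovikovAlgebra

variable {k A : Type*} [Field k] [AddCommGroup A] [Module k A] (mul : A →ₗ[k] A →ₗ[k] A)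

def commutatorSpan (I J : Submodule k A) : Submodule k A :=
  Submodule.span k {z : A | ∃ x ∈ I, ∃ y ∈ J, z = mul x y - mul y x}

theorem commutator_mem_commutatorSpan {I J : Submodule k A} {x y : A} (hx : x ∈ I) (hy : y ∈ J) :
    mul x y - mul y x ∈ commutatorSpan mul I J :=
  Submodule.subset_span ⟨x, hx, y, hy, rfl⟩

variable {mul}

theorem two_smul_commutator_mul
    (hls : ∀ x y z : A,
      mul x (mul y z) - mul (mul x y) z = mul y (mul x z) - mul (mul y x) z)
    (hnov : ∀ x y z : A, mul (mul x y) z = mul (mul x z) y) (x y b : A) :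
    (2 : k) • mul (mul x y - mul y x) b =
      (mul (mul x b) y - mul y (mul x b)) + (mul x (mul y b) - mul (mul y b) x) := by
  simp only [map_sub, LinearMap.sub_apply]
  linear_combination (norm := module) hnov x y b - hnov y x b - hls x y b

theorem mul_commutator
    (hls : ∀ x y z : A,
      mul x (mul y z) - mul (mul x y) z = mul y (mul x z) - mul (mul y x) z)
    (hnov : ∀ x y z : A, mul (mul x y) z = mul (mul x z) y) (a x y : A) :
    mul a (mul x y - mul y x) =
      (mul (mul a x) y - mul y (mul a x)) + (mul x (mul a y) - mul (mul a y) x)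
        - mul (mul x y - mul y x) a := by
  simp only [map_sub, LinearMap.sub_apply]
  linear_combination (norm := module) hls a x y - hls a y x + hnov x y a - hnov y x a

variable {I J : Submodule k A}
  (hls : ∀ x y z : A,
    mul x (mul y z) - mul (mul x y) z = mul y (mul x z) - mul (mul y x) z)
  (hnov : ∀ x y z : A, mul (mul x y) z = mul (mul x z) y)
  (hI : ∀ a : A, ∀ x ∈ I, mul a x ∈ I ∧ mul x a ∈ I)
  (hJ : ∀ a : A, ∀ y ∈ J, mul a y ∈ J ∧ mul y a ∈ J)
include hls hnov hI hJ

theorem commutator_mul_mem_commutatorSpan (h2 : (2 : k) ≠ 0) {x y : A} (hx : x ∈ I)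
    (hy : y ∈ J) (b : A) : mul (mul x y - mul y x) b ∈ commutatorSpan mul I J := by
  have htwo : (2 : k) • mul (mul x y - mul y x) b ∈ commutatorSpan mul I J := by
    rw [two_smul_commutator_mul hls hnov]
    exact add_mem (commutator_mem_commutatorSpan mul (hI b x hx).2 hy)
      (commutator_mem_commutatorSpan mul hx (hJ b y hy).2)
  simpa [smul_smul, h2] using Submodule.smul_mem _ (2 : k)⁻¹ htwo

theorem mul_commutator_mem_commutatorSpan (h2 : (2 : k) ≠ 0) (a : A) {x y : A} (hx : x ∈ I)
    (hy : y ∈ J) : mul a (mul x y - mul y x) ∈ commutatorSpan mul I J := by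
  rw [mul_commutator hls hnov]
  exact sub_mem (add_mem (commutator_mem_commutatorSpan mul (hI a x hx).1 hy)
    (commutator_mem_commutatorSpan mul hx (hJ a y hy).1))
    (commutator_mul_mem_commutatorSpan hls hnov hI hJ h2 hx hy a)

theorem commutatorSpan_isTwoSidedIdeal (h2 : (2 : k) ≠ 0) (a : A) {w : A}
    (hw : w ∈ commutatorSpan mul I J) :
    mul a w ∈ commutatorSpan mul I J ∧ mul w a ∈ commutatorSpan mul I J := by
  constructor
  · refine (Submodule.span_le (p := (commutatorSpan mul I J).comap (mul a))).2 ?_ hw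
    rintro _ ⟨x, hx, y, hy, rfl⟩
    exact mul_commutator_mem_commutatorSpan hls hnov hI hJ h2 a hx hy
  · refine (Submodule.span_le (p := (commutatorSpan mul I J).comap (mul.flip a))).2 ?_ hw
    rintro _ ⟨x, hx, y, hy, rfl⟩
    exact commutator_mul_mem_commutatorSpan hls hnov hI hJ h2 hx hy a

end NovikovAlgebra

theorem novikov_ideal_bracket_ideal
    {k A : Type*} [Field k] [CharZero k] [AddCommGroup A] [Module k A]
    (mul : A →ₗ[k] A →ₗ[k] A)
    (hls : ∀ x y z : A,
      mul x (mul y z) - mul (mul x y) z = mul y (mul x z) - mul (mul y x) z)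
    (hnov : ∀ x y z : A, mul (mul x y) z = mul (mul x z) y)
    (I J : Submodule k A)
    (hI : ∀ a : A, ∀ x ∈ I, mul a x ∈ I ∧ mul x a ∈ I)
    (hJ : ∀ a : A, ∀ y ∈ J, mul a y ∈ J ∧ mul y a ∈ J) :
    ∀ a : A,
      ∀ w ∈ Submodule.span k {z : A | ∃ x ∈ I, ∃ y ∈ J, z = mul x y - mul y x},
      mul a w ∈ Submodule.span k {z : A | ∃ x ∈ I, ∃ y ∈ J, z = mul x y - mul y x} ∧
      mul w a ∈ Submodule.span k {z : A | ∃ x ∈ I, ∃ y ∈ J, z = mul x y - mul y x} :=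
  fun a _ hw => NovikovAlgebra.commutatorSpan_isTwoSidedIdeal hls hnov hI hJ two_ne_zero a hw
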